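/- arXiv:2109.13495 — 2 statements merged into one kernel-verified Lean document; each statement's English description precedes it below -/
import Mathlib

section
/- Let A be an n×n nonnegative irreducible matrix. If λ ≥ 0 and x ∈ ℝ_{≥0}^n is a nonzero vector with A ⊗ x = λ·x, then λ = μ(A). (An irreducible matrix has exactly one max eigenvalue.) -/
open Filter Topology

/-- Max-times product of two square nonnegative matrices. -/
noncomputable def mProd {m : Type*} [Fintype m] (A B : Matrix m m NNReal) : Matrix m m NNReal :=
  fun i j => Finset.univ.sup fun k => A i k * B k j

/-- Max-times powers: `mPow A 0 = I`, `mPow A (k+1) = A ⊗ mPow A k`. -/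
noncomputable def mPow {m : Type*} [Fintype m] [DecidableEq m] (A : Matrix m m NNReal) :
    ℕ → Matrix m m NNReal
  | 0 => 1
  | k + 1 => mProd A (mPow A k)

/-- Max-times action of a matrix on a nonnegative vector. -/
noncomputable def mVec {m : Type*} [Fintype m] (A : Matrix m m NNReal) (x : m → NNReal) :
    m → NNReal :=
  fun i => Finset.univ.sup fun k => A i k * x k

/-- Maximum circuit geometric mean of a nonnegative matrix. -/
noncomputable def mu {m : Type*} [Fintype m] [DecidableEq m] (A : Matrix m m NNReal) : NNReal :=
  (Finset.Icc 1 (Fintype.card m)).sup fun ℓ =>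
    Finset.univ.sup fun i => (mPow A ℓ i i) ^ ((ℓ : ℝ)⁻¹)

/-- A nonnegative matrix is irreducible if its weighted digraph is strongly connected. -/
def MaxIrreducible {m : Type*} [Fintype m] [DecidableEq m] (A : Matrix m m NNReal) : Prop :=
  ∀ i j, ∃ k : ℕ, 1 ≤ k ∧ 0 < mPow A k i j

lemma mVec_mProd {m : Type*} [Fintype m] (A B : Matrix m m NNReal) (x : m → NNReal) :
    mVec (mProd A B) x = mVec A (mVec B x) := by
  funext i
  simp only [mVec, mProd]
  rw [show (Finset.univ.sup fun k => (Finset.univ.sup fun j => A i j * B j k) * x k)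
      = Finset.univ.sup fun k => Finset.univ.sup fun j => A i j * (B j k * x k) from ?_]
  · rw [Finset.sup_comm]
    congr 1; funext j
    rw [NNReal.mul_finset_sup]
  · congr 1; funext k
    rw [NNReal.finset_sup_mul]
    congr 1; funext j; ring

lemma mVec_one {m : Type*} [Fintype m] [DecidableEq m] (x : m → NNReal) :
    mVec (1 : Matrix m m NNReal) x = x := by
  funext i
  simp only [mVec]
  apply le_antisymm
  · apply Finset.sup_le
    intro k _
    by_cases h : i = k
    · subst h; simp [Matrix.one_apply_eq]
    · simp [Matrix.one_apply_ne h]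
  · have := Finset.le_sup (f := fun k => (1 : Matrix m m NNReal) i k * x k)
      (Finset.mem_univ i)
    simpa [Matrix.one_apply_eq] using this

lemma mVec_smul {m : Type*} [Fintype m] (A : Matrix m m NNReal) (x : m → NNReal) (c : NNReal) :
    mVec A (fun i => c * x i) = fun i => c * mVec A x i := by
  funext i
  simp only [mVec, NNReal.mul_finset_sup]
  congr 1; funext k; ring

lemma mVec_mPow {m : Type*} [Fintype m] [DecidableEq m] (A : Matrix m m NNReal)
    (lam : NNReal) (x : m → NNReal) (heig : mVec A x = fun i => lam * x i) (k : ℕ) :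
    mVec (mPow A k) x = fun i => lam ^ k * x i := by
  induction k with
  | zero => simp [mPow, mVec_one]
  | succ k ih =>
    show mVec (mProd A (mPow A k)) x = _
    rw [mVec_mProd, ih, mVec_smul, heig]
    funext i
    simp only []
    ring

lemma prod_path_le_mPow {m : Type*} [Fintype m] [DecidableEq m] (A : Matrix m m NNReal) :
    ∀ (ℓ : ℕ) (f : ℕ → m),
      (∏ t ∈ Finset.range ℓ, A (f t) (f (t + 1))) ≤ mPow A ℓ (f 0) (f ℓ) := by
  intro ℓ
  induction ℓ with
  | zero => intro f; simp [mPow, Matrix.one_apply_eq]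
  | succ ℓ ih =>
    intro f
    have h1 : (∏ t ∈ Finset.range ℓ, A (f (t + 1)) (f (t + 2))) ≤ mPow A ℓ (f 1) (f (ℓ + 1)) :=
      ih (fun t => f (t + 1))
    calc (∏ t ∈ Finset.range (ℓ + 1), A (f t) (f (t + 1)))
        = (∏ t ∈ Finset.range ℓ, A (f (t + 1)) (f (t + 2))) * A (f 0) (f 1) := by
          rw [Finset.prod_range_succ']
      _ ≤ mPow A ℓ (f 1) (f (ℓ + 1)) * A (f 0) (f 1) := mul_le_mul_left h1 _
      _ = A (f 0) (f 1) * mPow A ℓ (f 1) (f (ℓ + 1)) := mul_comm _ _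
      _ ≤ mPow A (ℓ + 1) (f 0) (f (ℓ + 1)) :=
          Finset.le_sup (f := fun k => A (f 0) k * mPow A ℓ k (f (ℓ + 1)))
            (Finset.mem_univ (f 1))

theorem stmt_7 (n : ℕ) (A : Matrix (Fin n) (Fin n) NNReal) (hA : MaxIrreducible A)
    (lam : NNReal) (x : Fin n → NNReal) (hx : x ≠ 0)
    (heig : mVec A x = fun i => lam * x i) :
    lam = mu A := by
  -- n is positive
  have hn : 0 < n := by
    rcases Nat.eq_zero_or_pos n with h | h
    · exfalso; apply hx; funext i; exact absurd i.isLt (by omega)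
    · exact h
  obtain ⟨j0, hj0⟩ : ∃ j, x j ≠ 0 := by
    by_contra h
    push_neg at h
    exact hx (funext fun i => h i)
  -- all entries of x are positive, and lam is positive
  have hxpos : ∀ i, 0 < x i := by
    intro i
    obtain ⟨k, hk1, hkpos⟩ := hA i j0
    have h1 : mPow A k i j0 * x j0 ≤ lam ^ k * x i := by
      have := congrFun (mVec_mPow A lam x heig k) i
      rw [← this]
      exact Finset.le_sup (f := fun j => mPow A k i j * x j) (Finset.mem_univ j0)
    have h2 : 0 < lam ^ k * x i :=
      lt_of_lt_of_le (mul_pos hkpos (pos_iff_ne_zero.mpr hj0)) h1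
    rw [pos_iff_ne_zero, mul_ne_zero_iff] at h2
    exact pos_iff_ne_zero.mpr h2.2
  have hlam : 0 < lam := by
    obtain ⟨k, hk1, hkpos⟩ := hA j0 j0
    have h1 : mPow A k j0 j0 * x j0 ≤ lam ^ k * x j0 := by
      have := congrFun (mVec_mPow A lam x heig k) j0
      rw [← this]
      exact Finset.le_sup (f := fun j => mPow A k j0 j * x j) (Finset.mem_univ j0)
    have h2 : 0 < lam ^ k * x j0 :=
      lt_of_lt_of_le (mul_pos hkpos (hxpos j0)) h1
    rw [pos_iff_ne_zero, mul_ne_zero_iff] at h2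
    rw [pos_iff_ne_zero]
    exact fun h => h2.1 (by rw [h]; exact zero_pow (by omega))
  -- upper bound: mu A ≤ lam
  have hcard : Fintype.card (Fin n) = n := Fintype.card_fin n
  have hub : mu A ≤ lam := by
    apply Finset.sup_le
    intro ℓ hℓ
    rw [Finset.mem_Icc] at hℓ
    have hℓ1 : 1 ≤ ℓ := hℓ.1
    apply Finset.sup_le
    intro i _
    have h1 : mPow A ℓ i i * x i ≤ lam ^ ℓ * x i := by
      have := congrFun (mVec_mPow A lam x heig ℓ) i
      rw [← this]
      exact Finset.le_sup (f := fun j => mPow A ℓ i j * x j) (Finset.mem_univ i)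
    have h2 : mPow A ℓ i i ≤ lam ^ ℓ := le_of_mul_le_mul_right h1 (hxpos i)
    calc (mPow A ℓ i i) ^ ((ℓ : ℝ)⁻¹) ≤ (lam ^ ℓ) ^ ((ℓ : ℝ)⁻¹) :=
          NNReal.rpow_le_rpow h2 (by positivity)
      _ = lam := by
          rw [← NNReal.rpow_natCast lam ℓ, ← NNReal.rpow_mul,
            mul_inv_cancel₀ (by exact_mod_cast by omega : (ℓ : ℝ) ≠ 0), NNReal.rpow_one]
  -- lower bound: lam ≤ mu A
  have hlb : lam ≤ mu A := by
    haveI : Nonempty (Fin n) := ⟨⟨0, hn⟩⟩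
    -- choose for each i a witness where the sup is attained
    have hchoice : ∀ i : Fin n, ∃ k, A i k * x k = lam * x i := by
      intro i
      obtain ⟨k, _, hk⟩ := Finset.exists_mem_eq_sup Finset.univ
        (Finset.univ_nonempty) (fun k => A i k * x k)
      exact ⟨k, by rw [← hk, ← congrFun heig i]; rfl⟩
    choose f hf using hchoice
    set i0 : Fin n := ⟨0, hn⟩
    set g : ℕ → Fin n := fun t => f^[t] i0 with hg
    have hgsucc : ∀ t, g (t + 1) = f (g t) := fun t => Function.iterate_succ_apply' f t i0
    -- pigeonhole: two equal values among g 0, ..., g n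
    obtain ⟨a, ha, b, hb, hab, heq⟩ :
        ∃ a ∈ Finset.range (n + 1), ∃ b ∈ Finset.range (n + 1), a ≠ b ∧ g a = g b := by
      exact Finset.exists_ne_map_eq_of_card_lt_of_maps_to
        (s := Finset.range (n + 1)) (t := Finset.univ) (by simp [hcard])
        (fun a _ => Finset.mem_univ (g a))
    rw [Finset.mem_range] at ha hb
    wlog hlt : a < b generalizing a b
    · exact this b hb a ha (Ne.symm hab) heq.symm (by omega)
    set ℓ := b - a with hℓdef
    have hℓ1 : 1 ≤ ℓ := by omega
    have hℓn : ℓ ≤ n := by omega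
    set h : ℕ → Fin n := fun t => g (a + t) with hh
    have hh0 : h ℓ = h 0 := by
      show g (a + ℓ) = g (a + 0)
      rw [show a + ℓ = b from by omega, Nat.add_zero]
      exact heq.symm
    have hhsucc : ∀ t, h (t + 1) = f (h t) := by
      intro t
      show g (a + (t + 1)) = f (g (a + t))
      rw [show a + (t + 1) = (a + t) + 1 from by omega]
      exact hgsucc (a + t)
    -- the product of weights along the cycle equals lam ^ ℓ
    set P := ∏ t ∈ Finset.range ℓ, A (h t) (h (t + 1)) with hP
    set Q := ∏ t ∈ Finset.range ℓ, x (h t) with hQ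
    have hQpos : Q ≠ 0 := by
      rw [hQ, Finset.prod_ne_zero_iff]
      exact fun t _ => (hxpos (h t)).ne'
    have hshift : (∏ t ∈ Finset.range ℓ, x (h (t + 1))) = Q := by
      have e1 : (∏ t ∈ Finset.range (ℓ + 1), x (h t))
          = (∏ t ∈ Finset.range ℓ, x (h (t + 1))) * x (h 0) := Finset.prod_range_succ' _ _
      have e2 : (∏ t ∈ Finset.range (ℓ + 1), x (h t)) = Q * x (h ℓ) := Finset.prod_range_succ _ _
      rw [e2, hh0] at e1
      exact (mul_right_cancel₀ (hxpos (h 0)).ne' e1.symm)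
    have hPQ : P * Q = lam ^ ℓ * Q := by
      calc P * Q = P * ∏ t ∈ Finset.range ℓ, x (h (t + 1)) := by rw [hshift]
        _ = ∏ t ∈ Finset.range ℓ, (A (h t) (h (t + 1)) * x (h (t + 1))) := by
            rw [hP, ← Finset.prod_mul_distrib]
        _ = ∏ t ∈ Finset.range ℓ, (lam * x (h t)) := by
            apply Finset.prod_congr rfl
            intro t _
            rw [hhsucc t]
            exact hf (h t)
        _ = lam ^ ℓ * Q := by rw [Finset.prod_mul_distrib, Finset.prod_const, Finset.card_range]
    have hPval : P = lam ^ ℓ := mul_right_cancel₀ hQpos hPQ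
    have hle : lam ^ ℓ ≤ mPow A ℓ (h 0) (h 0) := by
      rw [← hPval, hP]
      have := prod_path_le_mPow A ℓ h
      rwa [hh0] at this
    calc lam = (lam ^ ℓ) ^ ((ℓ : ℝ)⁻¹) := by
          rw [← NNReal.rpow_natCast lam ℓ, ← NNReal.rpow_mul,
            mul_inv_cancel₀ (by exact_mod_cast by omega : (ℓ : ℝ) ≠ 0), NNReal.rpow_one]
      _ ≤ (mPow A ℓ (h 0) (h 0)) ^ ((ℓ : ℝ)⁻¹) := NNReal.rpow_le_rpow hle (by positivity)
      _ ≤ Finset.univ.sup fun i => (mPow A ℓ i i) ^ ((ℓ : ℝ)⁻¹) :=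
          Finset.le_sup (f := fun i => (mPow A ℓ i i) ^ ((ℓ : ℝ)⁻¹)) (Finset.mem_univ (h 0))
      _ ≤ mu A := by
          unfold mu
          exact Finset.le_sup
            (f := fun ℓ => Finset.univ.sup fun i => (mPow A ℓ i i) ^ ((ℓ : ℝ)⁻¹))
            (by rw [Finset.mem_Icc, hcard]; exact ⟨hℓ1, hℓn⟩)
  exact le_antisymm hlb hub
end

section
/- Let A and B be n×n nonnegative matrices with A ⊗ B = B ⊗ A. Then μ(A ⊗ B) ≤ μ(A)·μ(B). Moreover, if A and B are irreducible, then μ(A ⊗ B) = μ(A)·μ(B). -/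
open Filter Topology

/-!
Every walk of length at least `Fintype.card ι` repeats a vertex, so an optimal walk can be
shortened by a cycle, whose geometric mean is at most `μ`. Repeating this bounds the diagonal
entries of `A^m` by `μ(A)^m` and all entries by a constant times `μ(A)^m`.

If `A ⊗ B = B ⊗ A` then `(A ⊗ B)^m = A^m ⊗ B^m`. A circuit of `A ⊗ B` of length `ℓ` and weight `x`
gives `x^k ≤ (A^{ℓk} ⊗ B^{ℓk})_{ii} ≤ K (μ(A) μ(B))^{ℓk}` for every `k`, hence
`x ≤ (μ(A) μ(B))^ℓ`. Conversely, for irreducible `A` a walk from `p` to an optimal circuit, around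
it and back shows `(A^m)_{pp} ≥ c μ(A)^m` along an arithmetic progression of `m`; the same holds
for `B`, and `(A^m)_{pp} (B^m)_{pp} ≤ ((A ⊗ B)^m)_{pp} ≤ μ(A ⊗ B)^m`.
-/

theorem le_of_forall_mul_pow_le {x y c K : NNReal} (hc : c ≠ 0)
    (h : ∀ k, c * x ^ k ≤ K * y ^ k) : x ≤ y := by
  by_contra! hyx
  have hx : x ≠ 0 := (zero_le.trans_lt hyx).ne'
  have hlim : Tendsto (fun k => K * (y / x) ^ k) atTop (𝓝 0) := by
    simpa using (NNReal.tendsto_pow_atTop_nhds_zero_of_lt_one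
      (NNReal.div_lt_one_of_lt hyx)).const_mul K
  obtain ⟨k, hk⟩ := (hlim.eventually (gt_mem_nhds (pos_iff_ne_zero.2 hc))).exists
  have := h k
  rw [div_pow, mul_div_assoc', div_lt_iff₀ (pow_pos (pos_iff_ne_zero.2 hx) k)] at hk
  exact this.not_gt hk

section MaxTimes

variable {ι : Type*}

def walkWeight (A : Matrix ι ι NNReal) (g : ℕ → ι) (m : ℕ) : NNReal :=
  ∏ t ∈ Finset.range m, A (g t) (g (t + 1))

theorem walkWeight_add (A : Matrix ι ι NNReal) (g : ℕ → ι) (m n : ℕ) :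
    walkWeight A g (m + n) = walkWeight A g m * walkWeight A (fun t => g (m + t)) n :=
  Finset.prod_range_add _ _ _

variable [Fintype ι]

theorem exists_apply_add_eq_of_le_card (g : ℕ → ι) :
    ∃ a c, 0 < c ∧ a + c ≤ Fintype.card ι ∧ g (a + c) = g a := by
  obtain ⟨x, y, hxy, hg⟩ := Fintype.exists_ne_map_eq_of_card_lt
    (fun t : Fin (Fintype.card ι + 1) => g t) (by simp)
  rcases lt_or_gt_of_ne hxy with h | h
  · exact ⟨x, y - x, by omega, by omega, by rw [Nat.add_sub_cancel' h.le]; exact hg.symm⟩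
  · exact ⟨y, x - y, by omega, by omega, by rw [Nat.add_sub_cancel' h.le]; exact hg⟩

theorem le_mProd (A B : Matrix ι ι NNReal) (i k j : ι) : A i k * B k j ≤ mProd A B i j :=
  Finset.le_sup (f := fun k => A i k * B k j) (Finset.mem_univ k)

theorem mProd_le {A B : Matrix ι ι NNReal} {i j : ι} {c : NNReal}
    (h : ∀ k, A i k * B k j ≤ c) : mProd A B i j ≤ c :=
  Finset.sup_le fun k _ => h k

theorem exists_mProd_apply_eq (A B : Matrix ι ι NNReal) (i j : ι) :
    ∃ k, mProd A B i j = A i k * B k j := by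
  obtain ⟨k, -, hk⟩ := Finset.exists_mem_eq_sup Finset.univ ⟨i, Finset.mem_univ i⟩
    fun k => A i k * B k j
  exact ⟨k, hk⟩

theorem mProd_assoc (A B C : Matrix ι ι NNReal) :
    mProd (mProd A B) C = mProd A (mProd B C) := by
  funext i j
  simp only [mProd, NNReal.finset_sup_mul, NNReal.mul_finset_sup, mul_assoc]
  exact Finset.sup_comm _ _ _

def maxEntry (A : Matrix ι ι NNReal) : NNReal :=
  Finset.univ.sup fun ij : ι × ι => A ij.1 ij.2

theorem apply_le_maxEntry (A : Matrix ι ι NNReal) (i j : ι) : A i j ≤ maxEntry A :=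
  Finset.le_sup (f := fun ij : ι × ι => A ij.1 ij.2) (Finset.mem_univ (i, j))

variable [DecidableEq ι]

theorem mProd_one (A : Matrix ι ι NNReal) : mProd A 1 = A := by
  funext i j
  refine le_antisymm (mProd_le fun k => ?_) (by simpa using le_mProd A 1 i j j)
  rcases eq_or_ne k j with rfl | h
  · simp
  · simp [Matrix.one_apply_ne h]

theorem one_mProd (A : Matrix ι ι NNReal) : mProd 1 A = A := by
  funext i j
  refine le_antisymm (mProd_le fun k => ?_) (by simpa using le_mProd 1 A i i j)
  rcases eq_or_ne i k with rfl | h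
  · simp
  · simp [Matrix.one_apply_ne h]

theorem mPow_zero (A : Matrix ι ι NNReal) : mPow A 0 = 1 := rfl

theorem mPow_succ (A : Matrix ι ι NNReal) (m : ℕ) : mPow A (m + 1) = mProd A (mPow A m) := rfl

theorem mPow_one (A : Matrix ι ι NNReal) : mPow A 1 = A := by
  rw [mPow_succ, mPow_zero, mProd_one]

theorem mPow_add (A : Matrix ι ι NNReal) (m n : ℕ) :
    mPow A (m + n) = mProd (mPow A m) (mPow A n) := by
  induction m with
  | zero => rw [Nat.zero_add, mPow_zero, one_mProd]
  | succ m ih => rw [Nat.add_right_comm, mPow_succ, ih, mPow_succ, mProd_assoc]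

theorem mPow_apply_mul_mPow_apply_le (A : Matrix ι ι NNReal) (m n : ℕ) (i j k : ι) :
    mPow A m i j * mPow A n j k ≤ mPow A (m + n) i k := by
  rw [mPow_add]
  exact le_mProd _ _ _ _ _

theorem mPow_apply_self_pow_le (A : Matrix ι ι NNReal) (m k : ℕ) (i : ι) :
    mPow A m i i ^ k ≤ mPow A (m * k) i i := by
  induction k with
  | zero => simp [mPow_zero]
  | succ k ih =>
    rw [pow_succ, Nat.mul_succ]
    exact (mul_le_mul_left ih _).trans (mPow_apply_mul_mPow_apply_le A _ _ i i i)

theorem mProd_mPow_comm {A B : Matrix ι ι NNReal} (hAB : mProd A B = mProd B A) (m : ℕ) :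
    mProd B (mPow A m) = mProd (mPow A m) B := by
  induction m with
  | zero => rw [mPow_zero, mProd_one, one_mProd]
  | succ m ih => rw [mPow_succ, ← mProd_assoc, ← hAB, mProd_assoc, ih, ← mProd_assoc]

theorem mPow_mProd_of_comm {A B : Matrix ι ι NNReal} (hAB : mProd A B = mProd B A) (m : ℕ) :
    mPow (mProd A B) m = mProd (mPow A m) (mPow B m) := by
  induction m with
  | zero => rw [mPow_zero, mPow_zero, mPow_zero, mProd_one]
  | succ m ih =>
    rw [mPow_succ, ih, mPow_succ, mPow_succ, mProd_assoc, ← mProd_assoc B,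
      mProd_mPow_comm hAB, mProd_assoc, mProd_assoc]

theorem walkWeight_le_mPow (A : Matrix ι ι NNReal) (g : ℕ → ι) (m : ℕ) :
    walkWeight A g m ≤ mPow A m (g 0) (g m) := by
  induction m generalizing g with
  | zero => simp [walkWeight, mPow_zero]
  | succ m ih =>
    rw [walkWeight, Finset.prod_range_succ', mul_comm, mPow_succ]
    exact (mul_le_mul_right (ih fun t => g (t + 1)) _).trans (le_mProd _ _ _ _ _)

theorem exists_walkWeight_eq_mPow (A : Matrix ι ι NNReal) (m : ℕ) (p q : ι) :
    ∃ g : ℕ → ι, g 0 = p ∧ g (m + 1) = q ∧ walkWeight A g (m + 1) = mPow A (m + 1) p q := by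
  induction m generalizing p with
  | zero =>
    refine ⟨fun t => if t = 0 then p else q, rfl, rfl, ?_⟩
    simp [walkWeight, mPow_one]
  | succ m ih =>
    obtain ⟨k, hk⟩ := exists_mProd_apply_eq A (mPow A (m + 1)) p q
    obtain ⟨g, rfl, hgq, hg⟩ := ih k
    refine ⟨fun | 0 => p | t + 1 => g t, rfl, hgq, ?_⟩
    rw [mPow_succ, hk, ← hg, walkWeight, Finset.prod_range_succ', mul_comm]
    rfl

theorem mu_le_iff_of_le_card {A : Matrix ι ι NNReal} {t : NNReal} :
    mu A ≤ t ↔ ∀ m, 0 < m → m ≤ Fintype.card ι → ∀ i, mPow A m i i ≤ t ^ m := by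
  simp only [mu, Finset.sup_le_iff, Finset.mem_Icc, Finset.mem_univ, true_implies]
  refine forall_congr' fun m => ⟨fun h hm hmN i => ?_, fun h hm i => ?_⟩
  · have := h ⟨hm, hmN⟩ i
    rwa [NNReal.rpow_inv_le_iff (by exact_mod_cast hm), NNReal.rpow_natCast] at this
  · rw [NNReal.rpow_inv_le_iff (by exact_mod_cast hm.1), NNReal.rpow_natCast]
    exact h hm.1 hm.2 i

theorem exists_mPow_apply_le_mu_pow_mul (A : Matrix ι ι NNReal) {m : ℕ}
    (hm : Fintype.card ι ≤ m) (p q : ι) :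
    ∃ c, 0 < c ∧ c ≤ m ∧ mPow A m p q ≤ mu A ^ c * mPow A (m - c) p q := by
  obtain ⟨m, rfl⟩ : ∃ m', m = m' + 1 :=
    Nat.exists_eq_succ_of_ne_zero (by have := Fintype.card_pos_iff.2 ⟨p⟩; omega)
  obtain ⟨g, rfl, rfl, hg⟩ := exists_walkWeight_eq_mPow A m p q
  obtain ⟨a, c, hc, hac, hcycle⟩ := exists_apply_add_eq_of_le_card g
  obtain ⟨d, hd⟩ : ∃ d, m + 1 = a + (c + d) := ⟨m + 1 - (a + c), by omega⟩
  refine ⟨c, hc, by omega, ?_⟩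
  rw [← hg, hd, walkWeight_add, walkWeight_add, show a + (c + d) - c = a + d by omega]
  have hcyc : walkWeight A (fun t => g (a + t)) c ≤ mu A ^ c := by
    refine (walkWeight_le_mPow _ _ c).trans ?_
    rw [Nat.add_zero, hcycle]
    exact mu_le_iff_of_le_card.1 le_rfl c hc (by omega) _
  have htail := walkWeight_le_mPow A (fun t => g (a + (c + t))) d
  simp only [Nat.add_zero, hcycle] at htail
  calc walkWeight A g a * (walkWeight A (fun t => g (a + t)) c *
        walkWeight A (fun t => g (a + (c + t))) d)
      ≤ mPow A a (g 0) (g a) * (mu A ^ c * mPow A d (g a) (g (a + (c + d)))) := by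
        gcongr
        exact walkWeight_le_mPow A g a
    _ = mu A ^ c * (mPow A a (g 0) (g a) * mPow A d (g a) (g (a + (c + d)))) := by ring
    _ ≤ mu A ^ c * mPow A (a + d) (g 0) (g (a + (c + d))) := by
        gcongr
        exact mPow_apply_mul_mPow_apply_le A a d _ _ _

theorem mPow_apply_self_le_mu_pow (A : Matrix ι ι NNReal) (m : ℕ) (i : ι) :
    mPow A m i i ≤ mu A ^ m := by
  induction m using Nat.strong_induction_on with
  | _ m ih =>
    rcases Nat.eq_zero_or_pos m with rfl | hm
    · simp [mPow_zero]
    rcases le_or_gt m (Fintype.card ι) with hmN | hNm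
    · exact mu_le_iff_of_le_card.1 le_rfl m hm hmN i
    obtain ⟨c, hc, hcm, hle⟩ := exists_mPow_apply_le_mu_pow_mul A hNm.le i i
    calc mPow A m i i ≤ mu A ^ c * mu A ^ (m - c) := hle.trans (by gcongr; exact ih _ (by omega))
      _ = mu A ^ m := pow_mul_pow_sub _ hcm

theorem mu_le_iff {A : Matrix ι ι NNReal} {t : NNReal} :
    mu A ≤ t ↔ ∀ m i, mPow A m i i ≤ t ^ m :=
  ⟨fun h m i => (mPow_apply_self_le_mu_pow A m i).trans (by gcongr),
    fun h => mu_le_iff_of_le_card.2 fun m _ _ i => h m i⟩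

theorem exists_mPow_apply_self_eq_mu_pow [Nonempty ι] (A : Matrix ι ι NNReal) :
    ∃ m, 0 < m ∧ ∃ i, mPow A m i i = mu A ^ m := by
  obtain ⟨m, hm, hmu⟩ := Finset.exists_mem_eq_sup (Finset.Icc 1 (Fintype.card ι))
    ⟨1, Finset.mem_Icc.2 ⟨le_rfl, Fintype.card_pos⟩⟩
    fun m => Finset.univ.sup fun i => mPow A m i i ^ (m : ℝ)⁻¹
  obtain ⟨i, -, hi⟩ := Finset.exists_mem_eq_sup Finset.univ Finset.univ_nonempty
    fun i => mPow A m i i ^ (m : ℝ)⁻¹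
  have hm0 : 0 < m := (Finset.mem_Icc.1 hm).1
  refine ⟨m, hm0, i, ?_⟩
  rw [mu, hmu, hi, NNReal.rpow_inv_natCast_pow _ hm0.ne']

theorem mPow_apply_eq_zero_of_mu_eq_zero {A : Matrix ι ι NNReal} (hA : mu A = 0) {m : ℕ}
    (hm : Fintype.card ι ≤ m) (p q : ι) : mPow A m p q = 0 := by
  obtain ⟨c, hc, -, hle⟩ := exists_mPow_apply_le_mu_pow_mul A hm p q
  simpa [hA, hc.ne'] using hle

theorem mPow_apply_le_maxEntry_pow (A : Matrix ι ι NNReal) (m : ℕ) (i j : ι) :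
    mPow A m i j ≤ maxEntry A ^ m := by
  induction m generalizing i with
  | zero =>
    rw [mPow_zero, pow_zero, Matrix.one_apply]
    split_ifs <;> simp
  | succ m ih =>
    rw [mPow_succ, pow_succ']
    exact mProd_le fun k => mul_le_mul' (apply_le_maxEntry A i k) (ih k)

theorem mu_le_maxEntry (A : Matrix ι ι NNReal) : mu A ≤ maxEntry A :=
  mu_le_iff.2 fun m i => mPow_apply_le_maxEntry_pow A m i i

-- `(A^m)_{pq} ≤ (maxEntry A / μ(A))^card * μ(A)^m`, multiplied out so that it holds for `μ = 0`.
theorem mu_pow_card_mul_mPow_apply_le (A : Matrix ι ι NNReal) (m : ℕ) (p q : ι) :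
    mu A ^ Fintype.card ι * mPow A m p q ≤ maxEntry A ^ Fintype.card ι * mu A ^ m := by
  induction m using Nat.strong_induction_on with
  | _ m ih =>
    rcases le_or_gt (Fintype.card ι) m with hNm | hmN
    · obtain ⟨c, hc, hcm, hle⟩ := exists_mPow_apply_le_mu_pow_mul A hNm p q
      calc mu A ^ Fintype.card ι * mPow A m p q
          ≤ mu A ^ c * (mu A ^ Fintype.card ι * mPow A (m - c) p q) := by
            rw [mul_left_comm]; gcongr
        _ ≤ mu A ^ c * (maxEntry A ^ Fintype.card ι * mu A ^ (m - c)) :=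
            mul_le_mul_right (ih (m - c) (by omega)) _
        _ = maxEntry A ^ Fintype.card ι * mu A ^ m := by
            rw [mul_left_comm, pow_mul_pow_sub _ hcm]
    · obtain ⟨k, hk⟩ := Nat.exists_eq_add_of_lt hmN
      rw [hk, pow_add, pow_add, pow_add]
      calc mu A ^ m * mu A ^ k * mu A ^ 1 * mPow A m p q
          ≤ mu A ^ m * maxEntry A ^ k * maxEntry A ^ 1 * maxEntry A ^ m := by
            gcongr
            exacts [mu_le_maxEntry A, mu_le_maxEntry A, mPow_apply_le_maxEntry_pow A m p q]
        _ = _ := by ring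

theorem mu_mProd_le_mul {A B : Matrix ι ι NNReal} (hAB : mProd A B = mProd B A) :
    mu (mProd A B) ≤ mu A * mu B := by
  refine mu_le_iff.2 fun m i => ?_
  set N := Fintype.card ι
  set x := mPow (mProd A B) m i i
  have hx : ∀ k, ∃ q, x ^ k ≤ mPow A (m * k) i q * mPow B (m * k) q i := fun k => by
    obtain ⟨q, hq⟩ := exists_mProd_apply_eq (mPow A (m * k)) (mPow B (m * k)) i i
    refine ⟨q, hq ▸ ?_⟩
    rw [← mPow_mProd_of_comm hAB]
    exact mPow_apply_self_pow_le _ m k i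
  rcases eq_or_ne (mu A * mu B) 0 with h0 | h0
  · rcases Nat.eq_zero_or_pos m with rfl | hm
    · simp [x, mPow_zero]
    have hN : N ≤ m * N := Nat.le_mul_of_pos_left N hm
    obtain ⟨q, hq⟩ := hx N
    have hxN : x ^ N = 0 := by
      rcases mul_eq_zero.1 h0 with h | h
      · simpa [mPow_apply_eq_zero_of_mu_eq_zero h hN] using hq
      · simpa [mPow_apply_eq_zero_of_mu_eq_zero h hN] using hq
    have : Nonempty ι := ⟨i⟩
    simp [pow_eq_zero_iff Fintype.card_ne_zero |>.1 hxN]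
  · refine le_of_forall_mul_pow_le (pow_ne_zero N h0)
      (K := (maxEntry A * maxEntry B) ^ N) fun k => ?_
    obtain ⟨q, hq⟩ := hx k
    calc (mu A * mu B) ^ N * x ^ k
        ≤ (mu A * mu B) ^ N * (mPow A (m * k) i q * mPow B (m * k) q i) := by gcongr
      _ = (mu A ^ N * mPow A (m * k) i q) * (mu B ^ N * mPow B (m * k) q i) := by ring
      _ ≤ (maxEntry A ^ N * mu A ^ (m * k)) * (maxEntry B ^ N * mu B ^ (m * k)) :=
          mul_le_mul' (mu_pow_card_mul_mPow_apply_le A _ i q)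
            (mu_pow_card_mul_mPow_apply_le B _ q i)
      _ = (maxEntry A * maxEntry B) ^ N * ((mu A * mu B) ^ m) ^ k := by ring

theorem MaxIrreducible.exists_mul_mu_pow_le {A : Matrix ι ι NNReal} (hA : MaxIrreducible A)
    (p : ι) : ∃ d, 0 < d ∧ ∃ c ≠ 0, ∀ k, c * mu A ^ (d * k) ≤ mPow A (d * k) p p := by
  have : Nonempty ι := ⟨p⟩
  obtain ⟨r, hr, q, hq⟩ := exists_mPow_apply_self_eq_mu_pow A
  obtain ⟨s, hs, hpq⟩ := hA p q
  obtain ⟨t, -, hqp⟩ := hA q p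
  set β := mPow A s p q * mPow A t q p
  have hβ0 : β ≠ 0 := (mul_pos hpq hqp).ne'
  have hβ : β ≤ mPow A (s + t) p p := mPow_apply_mul_mPow_apply_le A s t p q p
  have hβμ : β ^ r ≤ mu A ^ ((s + t) * r) := by
    rw [pow_mul]
    exact pow_le_pow_left' (hβ.trans (mPow_apply_self_le_mu_pow A _ p)) r
  have hμ0 : mu A ^ ((s + t) * r) ≠ 0 := (pow_ne_zero r hβ0 |>.bot_lt.trans_le hβμ).ne'
  refine ⟨(s + t) * r, by positivity, β ^ r / mu A ^ ((s + t) * r),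
    div_ne_zero (pow_ne_zero r hβ0) hμ0, fun k => ?_⟩
  rcases k with _ | k
  · simpa [mPow_zero] using div_le_one_of_le₀ hβμ zero_le
  obtain ⟨r, rfl⟩ : ∃ r', r = r' + 1 := ⟨r - 1, by omega⟩
  -- the closed walk (p → q → p)^r, then p → q, (s + t) k turns around the optimal circuit at q,
  -- and back q → p
  calc β ^ (r + 1) / mu A ^ ((s + t) * (r + 1)) * mu A ^ ((s + t) * (r + 1) * (k + 1))
      = β ^ r * (mPow A s p q * mPow A (r + 1) q q ^ ((s + t) * k) * mPow A t q p) := by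
        have hμ : mu A ^ ((s + t) * (r + 1) * (k + 1)) =
            mu A ^ ((s + t) * (r + 1)) * mPow A (r + 1) q q ^ ((s + t) * k) := by
          rw [hq, ← pow_mul, ← pow_add]
          ring_nf
        rw [hμ, ← mul_assoc, div_mul_cancel₀ _ hμ0]
        ring
    _ ≤ mPow A ((s + t) * r) p p *
          (mPow A s p q * mPow A ((r + 1) * ((s + t) * k)) q q * mPow A t q p) := by
        gcongr
        · exact (pow_le_pow_left' hβ r).trans (mPow_apply_self_pow_le A _ r p)
        · exact mPow_apply_self_pow_le A _ _ q
    _ ≤ mPow A ((s + t) * r) p p * mPow A (s + (r + 1) * ((s + t) * k) + t) p p := by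
        gcongr
        exact (mul_le_mul_left (mPow_apply_mul_mPow_apply_le A _ _ p q q) _).trans
          (mPow_apply_mul_mPow_apply_le A _ _ p q p)
    _ ≤ mPow A ((s + t) * (r + 1) * (k + 1)) p p :=
        (mPow_apply_mul_mPow_apply_le A _ _ p p p).trans_eq (by congr 1; ring)

theorem mul_mu_le_mu_mProd {A B : Matrix ι ι NNReal} (hAB : mProd A B = mProd B A)
    (hA : MaxIrreducible A) (hB : MaxIrreducible B) : mu A * mu B ≤ mu (mProd A B) := by
  rcases isEmpty_or_nonempty ι with hι | ⟨⟨p⟩⟩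
  · simp [mu]
  obtain ⟨d, hd, c, hc, hAp⟩ := hA.exists_mul_mu_pow_le p
  obtain ⟨e, he, c', hc', hBp⟩ := hB.exists_mul_mu_pow_le p
  refine (pow_le_pow_iff_left₀ zero_le zero_le (mul_pos hd he).ne').1
    (le_of_forall_mul_pow_le (mul_ne_zero hc hc') (K := 1) fun k => ?_)
  calc c * c' * ((mu A * mu B) ^ (d * e)) ^ k
      = (c * mu A ^ (d * (e * k))) * (c' * mu B ^ (e * (d * k))) := by ring
    _ ≤ mPow A (d * (e * k)) p p * mPow B (e * (d * k)) p p := mul_le_mul' (hAp _) (hBp _)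
    _ = mPow A (d * e * k) p p * mPow B (d * e * k) p p := by
        rw [← Nat.mul_assoc, Nat.mul_left_comm e, ← Nat.mul_assoc]
    _ ≤ mPow (mProd A B) (d * e * k) p p := by
        rw [mPow_mProd_of_comm hAB]
        exact le_mProd _ _ _ _ _
    _ ≤ mu (mProd A B) ^ (d * e * k) := mPow_apply_self_le_mu_pow _ _ p
    _ = 1 * (mu (mProd A B) ^ (d * e)) ^ k := by ring

end MaxTimes

theorem stmt_12 (n : ℕ) (A B : Matrix (Fin n) (Fin n) NNReal)
    (hcomm : mProd A B = mProd B A) :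
    mu (mProd A B) ≤ mu A * mu B ∧
      (MaxIrreducible A → MaxIrreducible B → mu (mProd A B) = mu A * mu B) :=
  ⟨mu_mProd_le_mul hcomm, fun hA hB =>
    (mu_mProd_le_mul hcomm).antisymm (mul_mu_le_mu_mProd hcomm hA hB)⟩
end
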